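/- Let η, θ ∈ ℝ, let G(θ) = [[cos 2θ, sin 2θ],[−sin 2θ, cos 2θ]], and let v₀ = (sin θ, cos θ) ∈ ℝ². Then for every natural number t, the second component of (η·G(θ))^t · v₀ equals η^t · cos((2t+1)θ); consequently the success probability of Grover's algorithm with bit-phase-flip (equivalently depolarizing) noise after t iterations is P_bp(t) = (1 − η^t cos((2t+1)θ))/2 = 1/2 − (η^t/2)·cos((2t+1)θ). -/
import Mathlib


open Matrix Real

/-- The ideal Grover iteration in the Bloch `(r_x, r_z)` representation. -/
noncomputable def GroverG (θ : ℝ) : Matrix (Fin 2) (Fin 2) ℝ :=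
  !![Real.cos (2 * θ), Real.sin (2 * θ); -Real.sin (2 * θ), Real.cos (2 * θ)]

theorem bit_phase_flip_success_probability (η θ : ℝ) (t : ℕ) :
    ((η • GroverG θ) ^ t).mulVec ![Real.sin θ, Real.cos θ] 1 =
      η ^ t * Real.cos ((2 * t + 1) * θ) ∧
    (1 - ((η • GroverG θ) ^ t).mulVec ![Real.sin θ, Real.cos θ] 1) / 2 =
      1 / 2 - (η ^ t / 2) * Real.cos ((2 * t + 1) * θ) := by
  have key : ∀ t : ℕ, ((η • GroverG θ) ^ t).mulVec ![Real.sin θ, Real.cos θ] =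
      ![η ^ t * Real.sin ((2 * t + 1) * θ), η ^ t * Real.cos ((2 * t + 1) * θ)] := by
    intro t
    induction t with
    | zero => simp [Matrix.mulVec_one]
    | succ n ih =>
      rw [pow_succ', ← Matrix.mulVec_mulVec, ih]
      funext i
      fin_cases i <;>
      · simp [GroverG, Matrix.mulVec, dotProduct, Fin.sum_univ_two,
          Matrix.smul_apply, smul_eq_mul]
        rw [show (2 * (↑n + 1) + 1) * θ = 2 * θ + (2 * ↑n + 1) * θ by ring]
        simp [Real.sin_add, Real.cos_add]
        ring
  have h1 : ((η • GroverG θ) ^ t).mulVec ![Real.sin θ, Real.cos θ] 1 =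
      η ^ t * Real.cos ((2 * t + 1) * θ) := by rw [key t]; simp
  exact ⟨h1, by rw [h1]; ring⟩
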